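/- arXiv:2312.16235 — 3 statements merged into one kernel-verified Lean document; each statement's English description precedes it below -/
import Mathlib

section
/- The labelling f of Theorem 1 is injective on the vertices of a rooted symmetric tree and takes values in {0, 1, ..., h_1 - 1}, where h_1 is the number of vertices of the tree. -/
/-- The labelling of Theorem 1 (Rofa 2021). A vertex at level `r = x.length + 1` of a
rooted symmetric tree with daughter degree sequence `k 1, ..., k (q-1)` and level numbers
`h` is identified with its sequence of edge indices `x = (x 1, ..., x (r-1))`, the entry
`x i` being `x.getD (i-1) 0`. Its label is
`x 1 * h 2 + x 2 * h 3 + ⋯ + x (r-1) * h r + (r-1)/2` if `r` is odd, and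
`(k 1 - x 1) * h 2 - x 2 * h 3 - ⋯ - x (r-1) * h r - (r-2)/2` if `r` is even. -/
def rofaLabel (k h : ℕ → ℕ) (x : List ℕ) : ℤ :=
  if (x.length + 1) % 2 = 1 then
    (∑ i ∈ Finset.range x.length, (x.getD i 0 : ℤ) * (h (i + 2) : ℤ)) +
      ((x.length / 2 : ℕ) : ℤ)
  else
    ((k 1 : ℤ) - (x.getD 0 0 : ℤ)) * (h 2 : ℤ) -
      (∑ i ∈ Finset.Icc 1 (x.length - 1), (x.getD i 0 : ℤ) * (h (i + 2) : ℤ)) -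
      (((x.length - 1) / 2 : ℕ) : ℤ)

/-- `x` is a valid index sequence for a vertex of the rooted symmetric tree with `q`
levels and daughter degree sequence `k 1, ..., k (q-1)`: it has length at most `q - 1`
and its `i`-th entry (the edge index `x i`, 1-based) is less than `k i`. -/
def ValidIdx (q : ℕ) (k : ℕ → ℕ) (x : List ℕ) : Prop :=
  x.length ≤ q - 1 ∧ ∀ i < x.length, x.getD i 0 < k (i + 1)

/-!
Deleting the first edge index maps the vertex `a :: x` to the vertex `x` of the subtree hanging
from level 2, whose degree sequence and level numbers are those of the tree shifted by one.
The parity switch in the definition of the label is exactly what makes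
`f (a :: x) = c * h 2 - f' x`, where `f'` is the label of the subtree and `c` is `k 1 - a` or
`a + 1` according to the parity of the length of `x`; in both cases `1 ≤ c ≤ k 1`. By induction
`0 ≤ f' x < h 2`, so `f (a :: x)` lies in the window `((c - 1) h 2, c h 2]`. These windows are
disjoint, avoid `f [] = 0`, and lie below `1 + k 1 * h 2 = h 1`. Hence the label determines `c`
and `f' x`, so by induction `x`, and then `a`.
-/

open Finset

theorem Finset.sum_Icc_one_eq_sum_range {M : Type*} [AddCommMonoid M] (f : ℕ → M) (n : ℕ) :
    ∑ i ∈ Icc 1 n, f i = ∑ i ∈ range n, f (i + 1) := by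
  rw [← Ico_add_one_right_eq_Icc, sum_Ico_eq_sum_range]
  simp only [add_tsub_cancel_right, add_comm 1]

def branchCoeff (k₁ a n : ℕ) : ℤ := if Even n then k₁ - a else a + 1

theorem branchCoeff_inj {k₁ a b n : ℕ} : branchCoeff k₁ a n = branchCoeff k₁ b n ↔ a = b := by
  unfold branchCoeff; split_ifs <;> omega

theorem branchCoeff_mem_Icc {k₁ a : ℕ} (n : ℕ) (ha : a < k₁) :
    branchCoeff k₁ a n ∈ Set.Icc 1 (k₁ : ℤ) := by
  unfold branchCoeff; split_ifs <;> constructor <;> omega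

theorem rofaLabel_nil (k h : ℕ → ℕ) : rofaLabel k h [] = 0 := by
  simp [rofaLabel]

theorem rofaLabel_cons (k h : ℕ → ℕ) (a : ℕ) (x : List ℕ)
    (hh₂ : Odd x.length → h 2 = 1 + k 2 * h 3) :
    rofaLabel k h (a :: x) = branchCoeff (k 1) a x.length * h 2 -
      rofaLabel (fun i => k (i + 1)) (fun i => h (i + 1)) x := by
  rcases Nat.even_or_odd x.length with hx | hx
  · have h₁ : ¬ (x.length + 1 + 1) % 2 = 1 := by rw [Nat.even_iff] at hx; omega
    have h₂ : (x.length + 1) % 2 = 1 := by rw [Nat.even_iff] at hx; omega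
    simp only [rofaLabel, branchCoeff, List.length_cons, if_neg h₁, if_pos h₂, if_pos hx,
      add_tsub_cancel_right, sum_Icc_one_eq_sum_range, List.getD_cons_succ, List.getD_cons_zero]
    ring_nf
  · have hh₂ := hh₂ hx
    obtain ⟨m, hm⟩ : ∃ m, x.length = m + 1 := Nat.exists_eq_add_one.2 hx.pos
    rw [hm, Nat.odd_iff] at hx
    have h₁ : (m + 1 + 1 + 1) % 2 = 1 := by omega
    have h₂ : ¬ (m + 1 + 1) % 2 = 1 := by omega
    have h₃ : ¬ Even (m + 1) := by rw [Nat.not_even_iff_odd, Nat.odd_iff]; omega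
    have hdiv : (m + 1 + 1) / 2 = m / 2 + 1 := by omega
    simp only [rofaLabel, branchCoeff, List.length_cons, hm, if_pos h₁, if_neg h₂, if_neg h₃, hdiv,
      sum_range_succ', sum_Icc_one_eq_sum_range, List.getD_cons_succ, List.getD_cons_zero,
      add_tsub_cancel_right, hh₂]
    push_cast
    ring_nf

theorem ValidIdx.eq_nil {k : ℕ → ℕ} {x : List ℕ} (hx : ValidIdx 1 k x) : x = [] :=
  List.eq_nil_of_length_eq_zero (Nat.le_zero.1 hx.1)

theorem validIdx_cons_iff {q : ℕ} (hq : 0 < q) {k : ℕ → ℕ} {a : ℕ} {x : List ℕ} :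
    ValidIdx (q + 1) k (a :: x) ↔ a < k 1 ∧ ValidIdx q (fun i => k (i + 1)) x := by
  simp only [ValidIdx, List.length_cons, add_tsub_cancel_right, Nat.forall_lt_succ_left,
    List.getD_cons_zero, List.getD_cons_succ, zero_add, Nat.le_sub_one_iff_lt hq, Order.add_one_le_iff]
  tauto

theorem eq_of_mul_sub_eq_mul_sub {H c c' r r' : ℤ} (hr : r ∈ Set.Ico 0 H) (hr' : r' ∈ Set.Ico 0 H)
    (h : c * H - r = c' * H - r') : c = c' := by
  obtain ⟨hr₀, hrH⟩ := hr
  obtain ⟨hr₀', hrH'⟩ := hr'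
  by_contra hne
  rcases lt_or_gt_of_ne hne with hlt | hlt <;> nlinarith

theorem rofaLabel_cons_of_validIdx {q : ℕ} {k h : ℕ → ℕ}
    (hrec : ∀ i, 1 ≤ i → i ≤ q → h i = 1 + k i * h (i + 1)) (a : ℕ) {x : List ℕ}
    (hx : ValidIdx q (fun i => k (i + 1)) x) :
    rofaLabel k h (a :: x) = branchCoeff (k 1) a x.length * h 2 -
      rofaLabel (fun i => k (i + 1)) (fun i => h (i + 1)) x :=
  rofaLabel_cons k h a x fun hodd => hrec 2 one_le_two (by have := hx.1; have := hodd.pos; omega)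

theorem rofaLabel_mem_Ico {q : ℕ} (hq : 1 ≤ q) {k h : ℕ → ℕ} (hhq : h q = 1)
    (hrec : ∀ i, 1 ≤ i → i ≤ q - 1 → h i = 1 + k i * h (i + 1)) {x : List ℕ}
    (hx : ValidIdx q k x) : rofaLabel k h x ∈ Set.Ico 0 (h 1 : ℤ) := by
  induction q, hq using Nat.le_induction generalizing k h x with
  | base => simp [hx.eq_nil, rofaLabel_nil, hhq]
  | succ q hq ih =>
    have hh₁ : (h 1 : ℤ) = 1 + k 1 * h 2 := by exact_mod_cast hrec 1 le_rfl (by omega)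
    have hrec' : ∀ i, 1 ≤ i → i ≤ q - 1 → h (i + 1) = 1 + k (i + 1) * h (i + 1 + 1) :=
      fun i hi hi' => hrec (i + 1) (by omega) (by omega)
    cases x with
    | nil => rw [rofaLabel_nil, hh₁]; constructor <;> positivity
    | cons a x =>
      obtain ⟨ha, hx⟩ := (validIdx_cons_iff hq).1 hx
      obtain ⟨hr₀, hr⟩ := ih hhq hrec' hx
      obtain ⟨hc₁, hck⟩ := branchCoeff_mem_Icc x.length ha
      rw [rofaLabel_cons_of_validIdx hrec a hx, hh₁]
      constructor <;> nlinarith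

theorem rofaLabel_injOn {q : ℕ} (hq : 1 ≤ q) {k h : ℕ → ℕ} (hhq : h q = 1)
    (hrec : ∀ i, 1 ≤ i → i ≤ q - 1 → h i = 1 + k i * h (i + 1)) :
    Set.InjOn (rofaLabel k h) {x | ValidIdx q k x} := by
  induction q, hq using Nat.le_induction generalizing k h with
  | base => intro x hx y hy _; rw [ValidIdx.eq_nil hx, ValidIdx.eq_nil hy]
  | succ q hq ih =>
    have hrec' : ∀ i, 1 ≤ i → i ≤ q - 1 → h (i + 1) = 1 + k (i + 1) * h (i + 1 + 1) :=
      fun i hi hi' => hrec (i + 1) (by omega) (by omega)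
    have hpos : ∀ a x, ValidIdx (q + 1) k (a :: x) → 0 < rofaLabel k h (a :: x) := by
      intro a x hx
      obtain ⟨ha, hx⟩ := (validIdx_cons_iff hq).1 hx
      obtain ⟨-, hr⟩ := rofaLabel_mem_Ico hq hhq hrec' hx
      obtain ⟨hc₁, -⟩ := branchCoeff_mem_Icc x.length ha
      rw [rofaLabel_cons_of_validIdx hrec a hx]
      nlinarith
    rintro (_ | ⟨a, x⟩) hx (_ | ⟨b, y⟩) hy hxy
    · rfl
    · exact absurd hxy (hpos b y hy).ne
    · exact absurd hxy (hpos a x hx).ne'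
    · obtain ⟨ha, hx⟩ := (validIdx_cons_iff hq).1 hx
      obtain ⟨hb, hy⟩ := (validIdx_cons_iff hq).1 hy
      rw [rofaLabel_cons_of_validIdx hrec a hx, rofaLabel_cons_of_validIdx hrec b hy] at hxy
      have hc := eq_of_mul_sub_eq_mul_sub (rofaLabel_mem_Ico hq hhq hrec' hx)
        (rofaLabel_mem_Ico hq hhq hrec' hy) hxy
      obtain rfl : x = y := ih hhq hrec' hx hy (by rw [hc] at hxy; linarith)
      rw [branchCoeff_inj.1 hc]

theorem rofaLabel_injective_range_general (q : ℕ) (k h : ℕ → ℕ) (hq : 1 ≤ q)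
    (hhq : h q = 1)
    (hrec : ∀ i, 1 ≤ i → i ≤ q - 1 → h i = 1 + k i * h (i + 1)) :
    (∀ x : List ℕ, ValidIdx q k x →
      0 ≤ rofaLabel k h x ∧ rofaLabel k h x < (h 1 : ℤ)) ∧
    (∀ x y : List ℕ, ValidIdx q k x → ValidIdx q k y →
      rofaLabel k h x = rofaLabel k h y → x = y) :=
  ⟨fun _ hx => rofaLabel_mem_Ico hq hhq hrec hx, fun _ _ hx hy => rofaLabel_injOn hq hhq hrec hx hy⟩

/-- The labelling `f` of Theorem 1 is injective on the vertices of a rooted symmetric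
tree and takes values in `{0, 1, ..., h 1 - 1}`, where `h 1` is the number of vertices. -/
theorem rofaLabel_injective_range (q : ℕ) (k h : ℕ → ℕ) (hq : 1 ≤ q)
    (hk : ∀ i, 1 ≤ i → i ≤ q - 1 → 1 ≤ k i)
    (hhq : h q = 1)
    (hrec : ∀ i, 1 ≤ i → i ≤ q - 1 → h i = 1 + k i * h (i + 1)) :
    (∀ x : List ℕ, ValidIdx q k x →
      0 ≤ rofaLabel k h x ∧ rofaLabel k h x < (h 1 : ℤ)) ∧
    (∀ x y : List ℕ, ValidIdx q k x → ValidIdx q k y →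
      rofaLabel k h x = rofaLabel k h y → x = y) :=
  rofaLabel_injective_range_general q k h hq hhq hrec
end

section
/- Let T be a rooted symmetric tree with daughter degree sequence (k_1, k_2) (three levels). Then T is 0-rotatable: for each of the root, any level-2 vertex, and any level-3 vertex, there is a graceful labelling of T assigning 0 to that vertex. -/
/-- A graceful labelling of a graph `G` on a finite vertex type: `f` is an injection into
`{0, ..., |V| - 1}` and the induced edge labels `|f u - f v|` are pairwise distinct. -/
def IsGraceful {V : Type*} [Fintype V] (G : SimpleGraph V) (f : V → ℕ) : Prop :=
  Function.Injective f ∧ (∀ v, f v < Fintype.card V) ∧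
    ∀ u v u' v', G.Adj u v → G.Adj u' v' →
      ((f u : ℤ) - (f v : ℤ)).natAbs = ((f u' : ℤ) - (f v' : ℤ)).natAbs →
      s(u, v) = s(u', v')


/-- The rooted symmetric tree with daughter degree sequence `(k₁, k₂)`: `none` is the
root, `some (i, none)` are the `k₁` level-2 vertices, and `some (i, some j)` are the
level-3 leaves under the level-2 vertex `i`. -/
def rst3 (k₁ k₂ : ℕ) : SimpleGraph (Option (Fin k₁ × Option (Fin k₂))) :=
  SimpleGraph.fromRel (fun u v =>
    (u = none ∧ ∃ i, v = some (i, none)) ∨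
    (∃ i j, u = some (i, none) ∧ v = some (i, some j)))

private lemma key {k a a' t t' : ℕ} (ht : t ≤ k) (ht' : t' ≤ k)
    (h : (k+1)*a + t = (k+1)*a' + t') : a = a' ∧ t = t' := by
  rcases lt_trichotomy a a' with hl | he | hl
  · exfalso
    have h2 : (k+1)*(a+1) ≤ (k+1)*a' := Nat.mul_le_mul le_rfl hl
    have h3 : (k+1)*(a+1) = (k+1)*a + (k+1) := by ring
    linarith
  · subst he
    exact ⟨rfl, Nat.add_left_cancel h⟩
  · exfalso
    have h2 : (k+1)*(a'+1) ≤ (k+1)*a := Nat.mul_le_mul le_rfl hl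
    have h3 : (k+1)*(a'+1) = (k+1)*a' + (k+1) := by ring
    linarith

private lemma cardV (k₁ k₂ : ℕ) :
    Fintype.card (Option (Fin k₁ × Option (Fin k₂))) = (k₂+1)*k₁ + 1 := by
  simp [Fintype.card_option, Fintype.card_prod]
  ring

private lemma rst3_adj_iff {k₁ k₂ : ℕ} {u v : Option (Fin k₁ × Option (Fin k₂))} :
    (rst3 k₁ k₂).Adj u v ↔
      (∃ i, (u = none ∧ v = some (i, none)) ∨ (v = none ∧ u = some (i, none))) ∨
      (∃ i j, (u = some (i, none) ∧ v = some (i, some j)) ∨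
              (v = some (i, none) ∧ u = some (i, some j))) := by
  rw [rst3, SimpleGraph.fromRel_adj]
  constructor
  · rintro ⟨hne, (⟨h1, i, h2⟩ | ⟨i, j, h1, h2⟩) | (⟨h1, i, h2⟩ | ⟨i, j, h1, h2⟩)⟩
    · exact Or.inl ⟨i, Or.inl ⟨h1, h2⟩⟩
    · exact Or.inr ⟨i, j, Or.inl ⟨h1, h2⟩⟩
    · exact Or.inl ⟨i, Or.inr ⟨h1, h2⟩⟩
    · exact Or.inr ⟨i, j, Or.inr ⟨h1, h2⟩⟩
  · rintro (⟨i, ⟨h1, h2⟩ | ⟨h1, h2⟩⟩ | ⟨i, j, ⟨h1, h2⟩ | ⟨h1, h2⟩⟩) <;> subst h1 <;> subst h2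
    · exact ⟨by simp, Or.inl (Or.inl ⟨rfl, i, rfl⟩)⟩
    · exact ⟨by simp, Or.inr (Or.inl ⟨rfl, i, rfl⟩)⟩
    · exact ⟨by simp, Or.inl (Or.inr ⟨i, j, rfl, rfl⟩)⟩
    · exact ⟨by simp, Or.inr (Or.inr ⟨i, j, rfl, rfl⟩)⟩

private lemma graceful_comp {V : Type*} [Fintype V] {G : SimpleGraph V} {f : V → ℕ}
    (hf : IsGraceful G f) (e : V → V) (he : Function.Injective e)
    (hadj : ∀ u v, G.Adj u v → G.Adj (e u) (e v)) : IsGraceful G (f ∘ e) := by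
  obtain ⟨h1, h2, h3⟩ := hf
  refine ⟨h1.comp he, fun v => h2 _, fun u v u' v' huv hu'v' hd => ?_⟩
  have hh := h3 (e u) (e v) (e u') (e v') (hadj _ _ huv) (hadj _ _ hu'v') hd
  rw [Sym2.eq_iff] at hh ⊢
  rcases hh with ⟨ha, hb⟩ | ⟨ha, hb⟩
  · exact Or.inl ⟨he ha, he hb⟩
  · exact Or.inr ⟨he ha, he hb⟩

private lemma graceful_compl {V : Type*} [Fintype V] {G : SimpleGraph V} {f : V → ℕ}
    (hf : IsGraceful G f) : IsGraceful G (fun v => (Fintype.card V - 1) - f v) := by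
  obtain ⟨h1, h2, h3⟩ := hf
  refine ⟨?_, ?_, ?_⟩
  · intro a b h
    simp only [] at h
    have ha := h2 a; have hb := h2 b
    exact h1 (by omega)
  · intro v
    have hv := h2 v
    have hpos : 0 < Fintype.card V := Fintype.card_pos_iff.mpr ⟨v⟩
    show (Fintype.card V - 1) - f v < Fintype.card V
    omega
  · intro u v u' v' huv hu'v' hd
    apply h3 u v u' v' huv hu'v'
    simp only [] at hd
    have ha := h2 u; have hb := h2 v; have hc := h2 u'; have he := h2 v'
    omega

private lemma rst3_map_adj {k₁ k₂ : ℕ} (σ : Fin k₁ → Fin k₁) (τ : Fin k₂ → Fin k₂)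
    {u v} (h : (rst3 k₁ k₂).Adj u v) :
    (rst3 k₁ k₂).Adj (Option.map (Prod.map σ (Option.map τ)) u)
      (Option.map (Prod.map σ (Option.map τ)) v) := by
  rw [rst3_adj_iff] at h ⊢
  rcases h with ⟨i, ⟨h1, h2⟩ | ⟨h1, h2⟩⟩ | ⟨i, j, ⟨h1, h2⟩ | ⟨h1, h2⟩⟩ <;> subst h1 <;> subst h2 <;>
    simp only [Option.map_some, Option.map_none, Prod.map]
  · exact Or.inl ⟨σ i, Or.inl (by simp)⟩
  · exact Or.inl ⟨σ i, Or.inr (by simp)⟩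
  · exact Or.inr ⟨σ i, τ j, Or.inl (by simp)⟩
  · exact Or.inr ⟨σ i, τ j, Or.inr (by simp)⟩

private def Flab (k₁ k₂ : ℕ) : Option (Fin k₁ × Option (Fin k₂)) → ℕ
  | none => 0
  | some (i, none) => (k₂+1)*(i.val+1)
  | some (i, some j) => (k₂+1)*(k₁-1-i.val) + j.val + 1

private lemma Flab_inj (k₁ k₂ : ℕ) : Function.Injective (Flab k₁ k₂) := by
  rintro (_ | ⟨i, _ | j⟩) (_ | ⟨i', _ | j'⟩) h <;> simp only [Flab] at h
  · rfl
  · exact absurd ((key (k := k₂) (a := 0) (t := 0) (a' := i'.val + 1) (t' := 0)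
      (Nat.zero_le _) (Nat.zero_le _) h).1) (by omega)
  · exact absurd ((key (k := k₂) (a := 0) (t := 0) (a' := k₁-1-i'.val) (t' := j'.val + 1)
      (Nat.zero_le _) (Nat.succ_le_of_lt j'.isLt) h).2) (by omega)
  · exact absurd ((key (k := k₂) (a := i.val + 1) (t := 0) (a' := 0) (t' := 0)
      (Nat.zero_le _) (Nat.zero_le _) h).1) (by omega)
  · obtain ⟨hA, -⟩ := key (k := k₂) (a := i.val + 1) (t := 0) (a' := i'.val + 1) (t' := 0)
      (Nat.zero_le _) (Nat.zero_le _) h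
    have : i = i' := Fin.ext (by omega)
    rw [this]
  · exact absurd ((key (k := k₂) (a := i.val + 1) (t := 0) (a' := k₁-1-i'.val) (t' := j'.val + 1)
      (Nat.zero_le _) (Nat.succ_le_of_lt j'.isLt) h).2) (by omega)
  · exact absurd ((key (k := k₂) (a := k₁-1-i.val) (t := j.val + 1) (a' := 0) (t' := 0)
      (Nat.succ_le_of_lt j.isLt) (Nat.zero_le _) h).2) (by omega)
  · exact absurd ((key (k := k₂) (a := k₁-1-i.val) (t := j.val + 1) (a' := i'.val + 1) (t' := 0)
      (Nat.succ_le_of_lt j.isLt) (Nat.zero_le _) h).2) (by omega)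
  · obtain ⟨hA, hT⟩ := key (k := k₂) (a := k₁-1-i.val) (t := j.val + 1) (a' := k₁-1-i'.val)
      (t' := j'.val + 1) (Nat.succ_le_of_lt j.isLt) (Nat.succ_le_of_lt j'.isLt) h
    have hi := i.isLt; have hi' := i'.isLt
    have e1 : i = i' := Fin.ext (by omega)
    have e2 : j = j' := Fin.ext (by omega)
    rw [e1, e2]

private def nlabF (k₁ k₂ : ℕ) : Fin k₁ ⊕ (Fin k₁ × Fin k₂) → ℕ
  | .inl i => (k₂+1)*(i.val+1)
  | .inr (i, j) => if 2*i.val+2 ≤ k₁ then (k₂+1)*(k₁-2-2*i.val) + (j.val+1)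
                   else (k₂+1)*(2*i.val+1-k₁) + (k₂-j.val)

private def symF (k₁ k₂ : ℕ) :
    Fin k₁ ⊕ (Fin k₁ × Fin k₂) → Sym2 (Option (Fin k₁ × Option (Fin k₂)))
  | .inl i => s(none, some (i, none))
  | .inr (i, j) => s(some (i, none), some (i, some j))

private lemma nlabF_inj (k₁ k₂ : ℕ) : Function.Injective (nlabF k₁ k₂) := by
  rintro (i | ⟨i, j⟩) (i' | ⟨i', j'⟩) h <;> simp only [nlabF] at h
  · have := key (k := k₂) (a := i.val + 1) (t := 0) (a' := i'.val + 1) (t' := 0)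
      (Nat.zero_le _) (Nat.zero_le _) h
    have : i = i' := Fin.ext (by omega)
    rw [this]
  · exfalso
    split_ifs at h with hc
    · exact absurd ((key (k := k₂) (a := i.val + 1) (t := 0) (a' := k₁-2-2*i'.val)
        (t' := j'.val + 1) (Nat.zero_le _) (Nat.succ_le_of_lt j'.isLt) h).2) (by omega)
    · have hj' := j'.isLt
      exact absurd ((key (k := k₂) (a := i.val + 1) (t := 0) (a' := 2*i'.val+1-k₁)
        (t' := k₂-j'.val) (Nat.zero_le _) (Nat.sub_le _ _) h).2) (by omega)
  · exfalso
    split_ifs at h with hc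
    · exact absurd ((key (k := k₂) (a := k₁-2-2*i.val) (t := j.val + 1) (a' := i'.val + 1)
        (t' := 0) (Nat.succ_le_of_lt j.isLt) (Nat.zero_le _) h).2) (by omega)
    · have hj := j.isLt
      exact absurd ((key (k := k₂) (a := 2*i.val+1-k₁) (t := k₂-j.val) (a' := i'.val + 1)
        (t' := 0) (Nat.sub_le _ _) (Nat.zero_le _) h).2) (by omega)
  · have hi := i.isLt; have hi' := i'.isLt; have hj := j.isLt; have hj' := j'.isLt
    split_ifs at h with h1 h2 h2
    · obtain ⟨hA, hT⟩ := key (k := k₂) (a := k₁-2-2*i.val) (t := j.val + 1)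
        (a' := k₁-2-2*i'.val) (t' := j'.val + 1)
        (Nat.succ_le_of_lt j.isLt) (Nat.succ_le_of_lt j'.isLt) h
      have e1 : i = i' := Fin.ext (by omega)
      have e2 : j = j' := Fin.ext (by omega)
      rw [e1, e2]
    · obtain ⟨hA, hT⟩ := key (k := k₂) (a := k₁-2-2*i.val) (t := j.val + 1)
        (a' := 2*i'.val+1-k₁) (t' := k₂-j'.val)
        (Nat.succ_le_of_lt j.isLt) (Nat.sub_le _ _) h
      exact absurd hA (by omega)
    · obtain ⟨hA, hT⟩ := key (k := k₂) (a := 2*i.val+1-k₁) (t := k₂-j.val)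
        (a' := k₁-2-2*i'.val) (t' := j'.val + 1)
        (Nat.sub_le _ _) (Nat.succ_le_of_lt j'.isLt) h
      exact absurd hA (by omega)
    · obtain ⟨hA, hT⟩ := key (k := k₂) (a := 2*i.val+1-k₁) (t := k₂-j.val)
        (a' := 2*i'.val+1-k₁) (t' := k₂-j'.val)
        (Nat.sub_le _ _) (Nat.sub_le _ _) h
      have e1 : i = i' := Fin.ext (by omega)
      have e2 : j = j' := Fin.ext (by omega)
      rw [e1, e2]

private lemma F_edge {k₁ k₂ : ℕ} {u v : Option (Fin k₁ × Option (Fin k₂))}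
    (h : (rst3 k₁ k₂).Adj u v) :
    ∃ d, s(u, v) = symF k₁ k₂ d ∧
      ((Flab k₁ k₂ u : ℤ) - (Flab k₁ k₂ v : ℤ)).natAbs = nlabF k₁ k₂ d := by
  rcases rst3_adj_iff.mp h with ⟨i, ⟨h1, h2⟩ | ⟨h1, h2⟩⟩ | ⟨i, j, ⟨h1, h2⟩ | ⟨h1, h2⟩⟩ <;>
    subst h1 <;> subst h2
  · refine ⟨.inl i, rfl, ?_⟩
    simp only [Flab, nlabF]
    generalize (k₂+1)*(i.val+1) = A
    omega
  · refine ⟨.inl i, Sym2.eq_swap, ?_⟩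
    simp only [Flab, nlabF]
    generalize (k₂+1)*(i.val+1) = A
    omega
  · refine ⟨.inr (i, j), rfl, ?_⟩
    simp only [Flab, nlabF]
    have hi := i.isLt; have hj := j.isLt
    by_cases hc : 2*i.val+2 ≤ k₁
    · rw [if_pos hc]
      have hs : (k₂+1)*(k₁-1-i.val) = (k₂+1)*(i.val+1) + (k₂+1)*(k₁-2-2*i.val) := by
        rw [← Nat.left_distrib]; congr 1; omega
      rw [hs]
      generalize (k₂+1)*(i.val+1) = A
      generalize (k₂+1)*(k₁-2-2*i.val) = B
      omega
    · rw [if_neg hc]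
      have hs : (k₂+1)*(i.val+1)
          = (k₂+1)*(k₁-1-i.val) + (k₂+1)*(2*i.val+1-k₁) + (k₂+1) := by
        rw [show (k₂+1)*(k₁-1-i.val) + (k₂+1)*(2*i.val+1-k₁) + (k₂+1)
            = (k₂+1)*((k₁-1-i.val) + (2*i.val+1-k₁) + 1) from by ring]
        congr 1; omega
      rw [hs]
      generalize (k₂+1)*(k₁-1-i.val) = A
      generalize (k₂+1)*(2*i.val+1-k₁) = B
      omega
  · refine ⟨.inr (i, j), Sym2.eq_swap, ?_⟩
    simp only [Flab, nlabF]
    have hi := i.isLt; have hj := j.isLt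
    by_cases hc : 2*i.val+2 ≤ k₁
    · rw [if_pos hc]
      have hs : (k₂+1)*(k₁-1-i.val) = (k₂+1)*(i.val+1) + (k₂+1)*(k₁-2-2*i.val) := by
        rw [← Nat.left_distrib]; congr 1; omega
      rw [hs]
      generalize (k₂+1)*(i.val+1) = A
      generalize (k₂+1)*(k₁-2-2*i.val) = B
      omega
    · rw [if_neg hc]
      have hs : (k₂+1)*(i.val+1)
          = (k₂+1)*(k₁-1-i.val) + (k₂+1)*(2*i.val+1-k₁) + (k₂+1) := by
        rw [show (k₂+1)*(k₁-1-i.val) + (k₂+1)*(2*i.val+1-k₁) + (k₂+1)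
            = (k₂+1)*((k₁-1-i.val) + (2*i.val+1-k₁) + 1) from by ring]
        congr 1; omega
      rw [hs]
      generalize (k₂+1)*(k₁-1-i.val) = A
      generalize (k₂+1)*(2*i.val+1-k₁) = B
      omega

private lemma F_graceful (k₁ k₂ : ℕ) : IsGraceful (rst3 k₁ k₂) (Flab k₁ k₂) := by
  refine ⟨Flab_inj k₁ k₂, ?_, ?_⟩
  · intro v
    rw [cardV]
    match v with
    | none => exact Nat.succ_pos _
    | some (i, none) =>
      show (k₂+1)*(i.val+1) < (k₂+1)*k₁ + 1
      exact Nat.lt_succ_of_le (Nat.mul_le_mul le_rfl i.isLt)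
    | some (i, some j) =>
      show (k₂+1)*(k₁-1-i.val) + j.val + 1 < (k₂+1)*k₁ + 1
      have h1 : (k₂+1)*(k₁-1-i.val) ≤ (k₂+1)*(k₁-1) := Nat.mul_le_mul le_rfl (Nat.sub_le _ _)
      have hk : 1 ≤ k₁ := i.pos
      have h3 : (k₂+1)*(k₁-1) + (k₂+1) = (k₂+1)*k₁ := by
        rw [show (k₂+1)*(k₁-1) + (k₂+1) = (k₂+1)*((k₁-1)+1) from by ring]
        congr 1; omega
      have hj := j.isLt
      linarith
  · intro u v u' v' huv hu'v' hd
    obtain ⟨d, hs, hn⟩ := F_edge huv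
    obtain ⟨d', hs', hn'⟩ := F_edge hu'v'
    have hdd : d = d' := nlabF_inj k₁ k₂ (by rw [← hn, ← hn']; exact hd)
    rw [hs, hs', hdd]

private def Glab (k₁ k₂ : ℕ) : Option (Fin k₁ × Option (Fin k₂)) → ℕ
  | none => k₂
  | some (i, none) => if i.val = 0 then (k₂+1)*k₁ else (k₂+1)*i.val + k₂
  | some (i, some j) => if i.val = 0 then j.val else (k₂+1)*(k₁-i.val) + j.val

private lemma Glab_inj (k₁ k₂ : ℕ) (hk₁ : 1 ≤ k₁) : Function.Injective (Glab k₁ k₂) := by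
  rintro (_ | ⟨i, _ | j⟩) (_ | ⟨i', _ | j'⟩) h <;> simp only [Glab] at h
  · rfl
  · exfalso
    split_ifs at h with hi'
    · exact absurd ((key (k := k₂) (a := 0) (t := k₂) (a' := k₁) (t' := 0)
        le_rfl (Nat.zero_le _) (by simpa using h)).1) (by omega)
    · exact absurd ((key (k := k₂) (a := 0) (t := k₂) (a' := i'.val) (t' := k₂)
        le_rfl le_rfl (by simpa using h)).1) (by omega)
  · exfalso
    split_ifs at h with hi'
    · exact absurd h (by have := j'.isLt; omega)
    · exact absurd ((key (k := k₂) (a := 0) (t := k₂) (a' := k₁-i'.val) (t' := j'.val)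
        le_rfl (le_of_lt j'.isLt) (by simpa using h)).2) (by have := j'.isLt; omega)
  · exfalso
    split_ifs at h with hi
    · exact absurd ((key (k := k₂) (a := k₁) (t := 0) (a' := 0) (t' := k₂)
        (Nat.zero_le _) le_rfl (by simpa using h)).1) (by omega)
    · exact absurd ((key (k := k₂) (a := i.val) (t := k₂) (a' := 0) (t' := k₂)
        le_rfl le_rfl (by simpa using h)).1) (by omega)
  · split_ifs at h with hi hi' hi'
    · have : i = i' := Fin.ext (by omega)
      rw [this]
    · exact absurd ((key (k := k₂) (a := k₁) (t := 0) (a' := i'.val) (t' := k₂)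
        (Nat.zero_le _) le_rfl h).1) (by have := i'.isLt; omega)
    · exact absurd ((key (k := k₂) (a := i.val) (t := k₂) (a' := k₁) (t' := 0)
        le_rfl (Nat.zero_le _) h).1) (by have := i.isLt; omega)
    · obtain ⟨hA, -⟩ := key (k := k₂) (a := i.val) (t := k₂) (a' := i'.val) (t' := k₂)
        le_rfl le_rfl h
      have : i = i' := Fin.ext hA
      rw [this]
  · exfalso
    split_ifs at h with hi hi' hi'
    · exact absurd ((key (k := k₂) (a := k₁) (t := 0) (a' := 0) (t' := j'.val)
        (Nat.zero_le _) (le_of_lt j'.isLt) (by simpa using h)).1) (by omega)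
    · exact absurd ((key (k := k₂) (a := k₁) (t := 0) (a' := k₁-i'.val) (t' := j'.val)
        (Nat.zero_le _) (le_of_lt j'.isLt) h).1) (by have := i'.isLt; omega)
    · exact absurd ((key (k := k₂) (a := i.val) (t := k₂) (a' := 0) (t' := j'.val)
        le_rfl (le_of_lt j'.isLt) (by simpa using h)).1) (by omega)
    · exact absurd ((key (k := k₂) (a := i.val) (t := k₂) (a' := k₁-i'.val) (t' := j'.val)
        le_rfl (le_of_lt j'.isLt) h).2) (by have := j'.isLt; omega)
  · exfalso
    split_ifs at h with hi
    · exact absurd h (by have := j.isLt; omega)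
    · exact absurd ((key (k := k₂) (a := k₁-i.val) (t := j.val) (a' := 0) (t' := k₂)
        (le_of_lt j.isLt) le_rfl (by simpa using h)).2) (by have := j.isLt; omega)
  · exfalso
    split_ifs at h with hi hi' hi'
    · exact absurd ((key (k := k₂) (a := 0) (t := j.val) (a' := k₁) (t' := 0)
        (le_of_lt j.isLt) (Nat.zero_le _) (by simpa using h)).1) (by omega)
    · exact absurd ((key (k := k₂) (a := 0) (t := j.val) (a' := i'.val) (t' := k₂)
        (le_of_lt j.isLt) le_rfl (by simpa using h)).2) (by have := j.isLt; omega)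
    · exact absurd ((key (k := k₂) (a := k₁-i.val) (t := j.val) (a' := k₁) (t' := 0)
        (le_of_lt j.isLt) (Nat.zero_le _) h).1) (by have := i.isLt; omega)
    · exact absurd ((key (k := k₂) (a := k₁-i.val) (t := j.val) (a' := i'.val) (t' := k₂)
        (le_of_lt j.isLt) le_rfl h).2) (by have := j.isLt; omega)
  · split_ifs at h with hi hi' hi'
    · have e1 : i = i' := Fin.ext (by omega)
      have e2 : j = j' := Fin.ext h
      rw [e1, e2]
    · exact absurd ((key (k := k₂) (a := 0) (t := j.val) (a' := k₁-i'.val) (t' := j'.val)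
        (le_of_lt j.isLt) (le_of_lt j'.isLt) (by simpa using h)).1)
        (by have := i'.isLt; omega)
    · exact absurd ((key (k := k₂) (a := k₁-i.val) (t := j.val) (a' := 0) (t' := j'.val)
        (le_of_lt j.isLt) (le_of_lt j'.isLt) (by simpa using h)).1)
        (by have := i.isLt; omega)
    · obtain ⟨hA, hT⟩ := key (k := k₂) (a := k₁-i.val) (t := j.val) (a' := k₁-i'.val)
        (t' := j'.val) (le_of_lt j.isLt) (le_of_lt j'.isLt) h
      have hi1 := i.isLt; have hi'1 := i'.isLt
      have e1 : i = i' := Fin.ext (by omega)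
      have e2 : j = j' := Fin.ext hT
      rw [e1, e2]

private def nlabG (k₁ k₂ : ℕ) : Fin k₁ ⊕ (Fin k₁ × Fin k₂) → ℕ
  | .inl i => if i.val = 0 then (k₂+1)*(k₁-1) + 1 else (k₂+1)*i.val
  | .inr (i, j) =>
      if i.val = 0 then
        (if j.val = 0 then (k₂+1)*k₁ else (k₂+1)*(k₁-1) + (k₂+1-j.val))
      else if 2*i.val+1 ≤ k₁ then (k₂+1)*(k₁-1-2*i.val) + (j.val+1)
      else (k₂+1)*(2*i.val-k₁) + (k₂-j.val)

private lemma nlabG_inj (k₁ k₂ : ℕ) (hk₂ : 1 ≤ k₂) : Function.Injective (nlabG k₁ k₂) := by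
  rintro (i | ⟨i, j⟩) (i' | ⟨i', j'⟩) h <;> simp only [nlabG] at h
  · split_ifs at h with hi hi' hi'
    · have : i = i' := Fin.ext (by omega)
      rw [this]
    · exact absurd ((key (k := k₂) (a := k₁-1) (t := 1) (a' := i'.val) (t' := 0)
        hk₂ (Nat.zero_le _) h).2) (by omega)
    · exact absurd ((key (k := k₂) (a := i.val) (t := 0) (a' := k₁-1) (t' := 1)
        (Nat.zero_le _) hk₂ h).2) (by omega)
    · obtain ⟨hA, -⟩ := key (k := k₂) (a := i.val) (t := 0) (a' := i'.val) (t' := 0)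
        (Nat.zero_le _) (Nat.zero_le _) h
      have : i = i' := Fin.ext hA
      rw [this]
  · exfalso
    split_ifs at h with hi hi' hj' hc
    · exact absurd ((key (k := k₂) (a := k₁-1) (t := 1) (a' := k₁) (t' := 0)
        hk₂ (Nat.zero_le _) h).2) (by omega)
    · exact absurd ((key (k := k₂) (a := k₁-1) (t := 1) (a' := k₁-1) (t' := k₂+1-j'.val)
        hk₂ (by omega) h).2) (by have := j'.isLt; omega)
    · have hi1 := i'.isLt
      exact absurd ((key (k := k₂) (a := k₁-1) (t := 1) (a' := k₁-1-2*i'.val) (t' := j'.val+1)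
        hk₂ (Nat.succ_le_of_lt j'.isLt) h).1) (by omega)
    · have hi1 := i'.isLt
      exact absurd ((key (k := k₂) (a := k₁-1) (t := 1) (a' := 2*i'.val-k₁) (t' := k₂-j'.val)
        hk₂ (Nat.sub_le _ _) h).1) (by omega)
    · exact absurd ((key (k := k₂) (a := i.val) (t := 0) (a' := k₁) (t' := 0)
        (Nat.zero_le _) (Nat.zero_le _) h).1) (by have := i.isLt; omega)
    · exact absurd ((key (k := k₂) (a := i.val) (t := 0) (a' := k₁-1) (t' := k₂+1-j'.val)
        (Nat.zero_le _) (by omega) h).2) (by have := j'.isLt; omega)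
    · exact absurd ((key (k := k₂) (a := i.val) (t := 0) (a' := k₁-1-2*i'.val) (t' := j'.val+1)
        (Nat.zero_le _) (Nat.succ_le_of_lt j'.isLt) h).2) (by omega)
    · exact absurd ((key (k := k₂) (a := i.val) (t := 0) (a' := 2*i'.val-k₁) (t' := k₂-j'.val)
        (Nat.zero_le _) (Nat.sub_le _ _) h).2) (by have := j'.isLt; omega)
  · exfalso
    split_ifs at h with hi hj hi' hi' hc hi' hi'
    · exact absurd ((key (k := k₂) (a := k₁) (t := 0) (a' := k₁-1) (t' := 1)
        (Nat.zero_le _) hk₂ h).2) (by omega)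
    · exact absurd ((key (k := k₂) (a := k₁) (t := 0) (a' := i'.val) (t' := 0)
        (Nat.zero_le _) (Nat.zero_le _) h).1) (by have := i'.isLt; omega)
    · exact absurd ((key (k := k₂) (a := k₁-1) (t := k₂+1-j.val) (a' := k₁-1) (t' := 1)
        (by omega) hk₂ h).2) (by have := j.isLt; omega)
    · exact absurd ((key (k := k₂) (a := k₁-1) (t := k₂+1-j.val) (a' := i'.val) (t' := 0)
        (by omega) (Nat.zero_le _) h).2) (by have := j.isLt; omega)
    · have hi1 := i.isLt
      exact absurd ((key (k := k₂) (a := k₁-1-2*i.val) (t := j.val+1) (a' := k₁-1) (t' := 1)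
        (Nat.succ_le_of_lt j.isLt) hk₂ h).1) (by omega)
    · exact absurd ((key (k := k₂) (a := k₁-1-2*i.val) (t := j.val+1) (a' := i'.val) (t' := 0)
        (Nat.succ_le_of_lt j.isLt) (Nat.zero_le _) h).2) (by omega)
    · have hi1 := i.isLt
      exact absurd ((key (k := k₂) (a := 2*i.val-k₁) (t := k₂-j.val) (a' := k₁-1) (t' := 1)
        (Nat.sub_le _ _) hk₂ h).1) (by omega)
    · exact absurd ((key (k := k₂) (a := 2*i.val-k₁) (t := k₂-j.val) (a' := i'.val) (t' := 0)
        (Nat.sub_le _ _) (Nat.zero_le _) h).2) (by have := j.isLt; omega)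
  · have hk₁ : 1 ≤ k₁ := i.pos
    have hi1 := i.isLt; have hi'1 := i'.isLt; have hj1 := j.isLt; have hj'1 := j'.isLt
    by_cases hi : i.val = 0 <;> by_cases hi' : i'.val = 0 <;>
      simp only [hi, hi', if_pos, if_neg, if_true, if_false] at h
    · by_cases hj : j.val = 0 <;> by_cases hj' : j'.val = 0 <;>
        [rw [if_pos hj, if_pos hj'] at h; rw [if_pos hj, if_neg hj'] at h;
         rw [if_neg hj, if_pos hj'] at h; rw [if_neg hj, if_neg hj'] at h]
      · have e1 : i = i' := Fin.ext (by omega)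
        have e2 : j = j' := Fin.ext (by omega)
        rw [e1, e2]
      · exact absurd ((key (k := k₂) (a := k₁) (t := 0) (a' := k₁-1) (t' := k₂+1-j'.val)
          (Nat.zero_le _) (by omega) h).1) (by omega)
      · exact absurd ((key (k := k₂) (a := k₁-1) (t := k₂+1-j.val) (a' := k₁) (t' := 0)
          (by omega) (Nat.zero_le _) h).1) (by omega)
      · obtain ⟨-, hT⟩ := key (k := k₂) (a := k₁-1) (t := k₂+1-j.val) (a' := k₁-1)
          (t' := k₂+1-j'.val) (by omega) (by omega) h
        have e1 : i = i' := Fin.ext (by omega)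
        have e2 : j = j' := Fin.ext (by omega)
        rw [e1, e2]
    · exfalso
      by_cases hj : j.val = 0 <;> [rw [if_pos hj] at h; rw [if_neg hj] at h] <;>
        by_cases hc' : 2*i'.val+1 ≤ k₁ <;> [skip; skip; skip; skip]
      · rw [if_pos hc'] at h
        exact absurd ((key (k := k₂) (a := k₁) (t := 0) (a' := k₁-1-2*i'.val) (t' := j'.val+1)
          (Nat.zero_le _) (Nat.succ_le_of_lt j'.isLt) h).1) (by omega)
      · rw [if_neg hc'] at h
        exact absurd ((key (k := k₂) (a := k₁) (t := 0) (a' := 2*i'.val-k₁) (t' := k₂-j'.val)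
          (Nat.zero_le _) (Nat.sub_le _ _) h).1) (by omega)
      · rw [if_pos hc'] at h
        exact absurd ((key (k := k₂) (a := k₁-1) (t := k₂+1-j.val) (a' := k₁-1-2*i'.val)
          (t' := j'.val+1) (by omega) (Nat.succ_le_of_lt j'.isLt) h).1) (by omega)
      · rw [if_neg hc'] at h
        exact absurd ((key (k := k₂) (a := k₁-1) (t := k₂+1-j.val) (a' := 2*i'.val-k₁)
          (t' := k₂-j'.val) (by omega) (Nat.sub_le _ _) h).1) (by omega)
    · exfalso
      by_cases hj' : j'.val = 0 <;> [rw [if_pos hj'] at h; rw [if_neg hj'] at h] <;>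
        by_cases hc : 2*i.val+1 ≤ k₁ <;> [skip; skip; skip; skip]
      · rw [if_pos hc] at h
        exact absurd ((key (k := k₂) (a := k₁-1-2*i.val) (t := j.val+1) (a' := k₁) (t' := 0)
          (Nat.succ_le_of_lt j.isLt) (Nat.zero_le _) h).1) (by omega)
      · rw [if_neg hc] at h
        exact absurd ((key (k := k₂) (a := 2*i.val-k₁) (t := k₂-j.val) (a' := k₁) (t' := 0)
          (Nat.sub_le _ _) (Nat.zero_le _) h).1) (by omega)
      · rw [if_pos hc] at h
        exact absurd ((key (k := k₂) (a := k₁-1-2*i.val) (t := j.val+1) (a' := k₁-1)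
          (t' := k₂+1-j'.val) (Nat.succ_le_of_lt j.isLt) (by omega) h).1) (by omega)
      · rw [if_neg hc] at h
        exact absurd ((key (k := k₂) (a := 2*i.val-k₁) (t := k₂-j.val) (a' := k₁-1)
          (t' := k₂+1-j'.val) (Nat.sub_le _ _) (by omega) h).1) (by omega)
    · by_cases hc : 2*i.val+1 ≤ k₁ <;> by_cases hc' : 2*i'.val+1 ≤ k₁ <;>
        [rw [if_pos hc, if_pos hc'] at h; rw [if_pos hc, if_neg hc'] at h;
         rw [if_neg hc, if_pos hc'] at h; rw [if_neg hc, if_neg hc'] at h]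
      · obtain ⟨hA, hT⟩ := key (k := k₂) (a := k₁-1-2*i.val) (t := j.val+1)
          (a' := k₁-1-2*i'.val) (t' := j'.val+1)
          (Nat.succ_le_of_lt j.isLt) (Nat.succ_le_of_lt j'.isLt) h
        have e1 : i = i' := Fin.ext (by omega)
        have e2 : j = j' := Fin.ext (by omega)
        rw [e1, e2]
      · obtain ⟨hA, -⟩ := key (k := k₂) (a := k₁-1-2*i.val) (t := j.val+1)
          (a' := 2*i'.val-k₁) (t' := k₂-j'.val)
          (Nat.succ_le_of_lt j.isLt) (Nat.sub_le _ _) h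
        exact absurd hA (by omega)
      · obtain ⟨hA, -⟩ := key (k := k₂) (a := 2*i.val-k₁) (t := k₂-j.val)
          (a' := k₁-1-2*i'.val) (t' := j'.val+1)
          (Nat.sub_le _ _) (Nat.succ_le_of_lt j'.isLt) h
        exact absurd hA (by omega)
      · obtain ⟨hA, hT⟩ := key (k := k₂) (a := 2*i.val-k₁) (t := k₂-j.val)
          (a' := 2*i'.val-k₁) (t' := k₂-j'.val)
          (Nat.sub_le _ _) (Nat.sub_le _ _) h
        have e1 : i = i' := Fin.ext (by omega)
        have e2 : j = j' := Fin.ext (by omega)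
        rw [e1, e2]

private lemma G_edge {k₁ k₂ : ℕ} (hk₁ : 1 ≤ k₁) {u v : Option (Fin k₁ × Option (Fin k₂))}
    (h : (rst3 k₁ k₂).Adj u v) :
    ∃ d, s(u, v) = symF k₁ k₂ d ∧
      ((Glab k₁ k₂ u : ℤ) - (Glab k₁ k₂ v : ℤ)).natAbs = nlabG k₁ k₂ d := by
  have hs1 : (k₂+1)*k₁ = (k₂+1)*(k₁-1) + k₂ + 1 := by
    rw [show (k₂+1)*(k₁-1) + k₂ + 1 = (k₂+1)*((k₁-1)+1) from by ring]
    congr 1; omega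
  rcases rst3_adj_iff.mp h with ⟨i, ⟨h1, h2⟩ | ⟨h1, h2⟩⟩ | ⟨i, j, ⟨h1, h2⟩ | ⟨h1, h2⟩⟩ <;>
    subst h1 <;> subst h2 <;>
    [refine ⟨.inl i, rfl, ?_⟩; refine ⟨.inl i, Sym2.eq_swap, ?_⟩;
     refine ⟨.inr (i, j), rfl, ?_⟩; refine ⟨.inr (i, j), Sym2.eq_swap, ?_⟩] <;>
    simp only [Glab, nlabG] <;>
    [by_cases hi : i.val = 0; by_cases hi : i.val = 0; skip; skip]
  · rw [if_pos hi, if_pos hi, hs1]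
    generalize (k₂+1)*(k₁-1) = A
    omega
  · rw [if_neg hi, if_neg hi]
    generalize (k₂+1)*i.val = A
    omega
  · rw [if_pos hi, if_pos hi, hs1]
    generalize (k₂+1)*(k₁-1) = A
    omega
  · rw [if_neg hi, if_neg hi]
    generalize (k₂+1)*i.val = A
    omega
  · have hi1 := i.isLt; have hj1 := j.isLt
    by_cases hi : i.val = 0
    · rw [if_pos hi, if_pos hi, if_pos hi]
      by_cases hj : j.val = 0
      · rw [if_pos hj, hj]
        generalize (k₂+1)*k₁ = A
        omega
      · rw [if_neg hj, hs1]
        generalize (k₂+1)*(k₁-1) = A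
        omega
    · rw [if_neg hi, if_neg hi, if_neg hi]
      by_cases hc : 2*i.val+1 ≤ k₁
      · rw [if_pos hc]
        have hs2 : (k₂+1)*(k₁-i.val)
            = (k₂+1)*i.val + (k₂+1)*(k₁-1-2*i.val) + (k₂+1) := by
          rw [show (k₂+1)*i.val + (k₂+1)*(k₁-1-2*i.val) + (k₂+1)
              = (k₂+1)*(i.val + (k₁-1-2*i.val) + 1) from by ring]
          congr 1; omega
        rw [hs2]
        generalize (k₂+1)*i.val = A
        generalize (k₂+1)*(k₁-1-2*i.val) = B
        omega
      · rw [if_neg hc]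
        have hs3 : (k₂+1)*i.val = (k₂+1)*(k₁-i.val) + (k₂+1)*(2*i.val-k₁) := by
          rw [← Nat.left_distrib]; congr 1; omega
        rw [hs3]
        generalize (k₂+1)*(k₁-i.val) = A
        generalize (k₂+1)*(2*i.val-k₁) = B
        omega
  · have hi1 := i.isLt; have hj1 := j.isLt
    by_cases hi : i.val = 0
    · rw [if_pos hi, if_pos hi, if_pos hi]
      by_cases hj : j.val = 0
      · rw [if_pos hj, hj]
        generalize (k₂+1)*k₁ = A
        omega
      · rw [if_neg hj, hs1]
        generalize (k₂+1)*(k₁-1) = A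
        omega
    · rw [if_neg hi, if_neg hi, if_neg hi]
      by_cases hc : 2*i.val+1 ≤ k₁
      · rw [if_pos hc]
        have hs2 : (k₂+1)*(k₁-i.val)
            = (k₂+1)*i.val + (k₂+1)*(k₁-1-2*i.val) + (k₂+1) := by
          rw [show (k₂+1)*i.val + (k₂+1)*(k₁-1-2*i.val) + (k₂+1)
              = (k₂+1)*(i.val + (k₁-1-2*i.val) + 1) from by ring]
          congr 1; omega
        rw [hs2]
        generalize (k₂+1)*i.val = A
        generalize (k₂+1)*(k₁-1-2*i.val) = B
        omega
      · rw [if_neg hc]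
        have hs3 : (k₂+1)*i.val = (k₂+1)*(k₁-i.val) + (k₂+1)*(2*i.val-k₁) := by
          rw [← Nat.left_distrib]; congr 1; omega
        rw [hs3]
        generalize (k₂+1)*(k₁-i.val) = A
        generalize (k₂+1)*(2*i.val-k₁) = B
        omega

private lemma G_graceful (k₁ k₂ : ℕ) (hk₁ : 1 ≤ k₁) (hk₂ : 1 ≤ k₂) :
    IsGraceful (rst3 k₁ k₂) (Glab k₁ k₂) := by
  refine ⟨Glab_inj k₁ k₂ hk₁, ?_, ?_⟩
  · intro v
    rw [cardV]
    have h1 : (k₂+1)*1 ≤ (k₂+1)*k₁ := Nat.mul_le_mul le_rfl hk₁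
    have h2 : (k₂+1)*1 = k₂+1 := by ring
    match v with
    | none =>
      show k₂ < (k₂+1)*k₁ + 1
      linarith
    | some (i, none) =>
      show (if i.val = 0 then (k₂+1)*k₁ else (k₂+1)*i.val + k₂) < (k₂+1)*k₁ + 1
      split_ifs with hi
      · exact Nat.lt_succ_self _
      · have h3 : (k₂+1)*(i.val+1) ≤ (k₂+1)*k₁ := Nat.mul_le_mul le_rfl i.isLt
        have h4 : (k₂+1)*(i.val+1) = (k₂+1)*i.val + (k₂+1) := by ring
        linarith
    | some (i, some j) =>
      show (if i.val = 0 then j.val else (k₂+1)*(k₁-i.val) + j.val) < (k₂+1)*k₁ + 1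
      have hj := j.isLt
      split_ifs with hi
      · linarith
      · have h3 : (k₂+1)*(k₁-i.val) ≤ (k₂+1)*(k₁-1) :=
          Nat.mul_le_mul le_rfl (by have := i.isLt; omega)
        have h4 : (k₂+1)*(k₁-1) + (k₂+1) = (k₂+1)*k₁ := by
          rw [show (k₂+1)*(k₁-1) + (k₂+1) = (k₂+1)*((k₁-1)+1) from by ring]
          congr 1; omega
        linarith
  · intro u v u' v' huv hu'v' hd
    obtain ⟨d, hs, hn⟩ := G_edge hk₁ huv
    obtain ⟨d', hs', hn'⟩ := G_edge hk₁ hu'v'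
    have hdd : d = d' := nlabG_inj k₁ k₂ hk₂ (by rw [← hn, ← hn']; exact hd)
    rw [hs, hs', hdd]

/-- Rooted symmetric trees with 3 levels (daughter degree sequence `(k₁, k₂)`) are
0-rotatable: the root, every level-2 vertex and every level-3 vertex can receive label
`0` in some graceful labelling. -/
theorem rst3_zeroRotatable (k₁ k₂ : ℕ) (hk₁ : 1 ≤ k₁) (hk₂ : 1 ≤ k₂) :
    ∀ v : Option (Fin k₁ × Option (Fin k₂)),
      ∃ f : Option (Fin k₁ × Option (Fin k₂)) → ℕ,
        IsGraceful (rst3 k₁ k₂) f ∧ f v = 0 := by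
  intro v
  match v with
  | none => exact ⟨Flab k₁ k₂, F_graceful k₁ k₂, rfl⟩
  | some (i, none) =>
    have last : Fin k₁ := ⟨k₁ - 1, by omega⟩
    let σ : Fin k₁ → Fin k₁ := ⇑(Equiv.swap i ⟨k₁ - 1, by omega⟩)
    let e : Option (Fin k₁ × Option (Fin k₂)) → Option (Fin k₁ × Option (Fin k₂)) :=
      Option.map (Prod.map σ (Option.map (id : Fin k₂ → Fin k₂)))
    refine ⟨(fun w => (Fintype.card (Option (Fin k₁ × Option (Fin k₂))) - 1) - Flab k₁ k₂ w)
        ∘ e, ?_, ?_⟩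
    · refine graceful_comp (graceful_compl (F_graceful k₁ k₂)) e ?_ ?_
      · exact Option.map_injective
          ((Equiv.swap i ⟨k₁ - 1, by omega⟩).injective.prodMap
            (Option.map_injective (fun a b h => h)))
      · exact fun u v h => rst3_map_adj σ id h
    · have he : e (some (i, none)) = some (⟨k₁ - 1, by omega⟩, none) := by
        simp only [e, σ, Option.map_some, Prod.map, Option.map_none]
        rw [Equiv.swap_apply_left]
      show (Fintype.card (Option (Fin k₁ × Option (Fin k₂))) - 1)
          - Flab k₁ k₂ (e (some (i, none))) = 0
      rw [he]
      show (Fintype.card (Option (Fin k₁ × Option (Fin k₂))) - 1) - (k₂+1)*((k₁-1)+1) = 0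
      rw [cardV, show k₁-1+1 = k₁ from by omega, Nat.add_sub_cancel, Nat.sub_self]
  | some (i, some j) =>
    let σ : Fin k₁ → Fin k₁ := ⇑(Equiv.swap i ⟨0, by omega⟩)
    let τ : Fin k₂ → Fin k₂ := ⇑(Equiv.swap j ⟨0, by omega⟩)
    let e : Option (Fin k₁ × Option (Fin k₂)) → Option (Fin k₁ × Option (Fin k₂)) :=
      Option.map (Prod.map σ (Option.map τ))
    refine ⟨Glab k₁ k₂ ∘ e, ?_, ?_⟩
    · refine graceful_comp (G_graceful k₁ k₂ hk₁ hk₂) e ?_ ?_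
      · exact Option.map_injective
          ((Equiv.swap i ⟨0, by omega⟩).injective.prodMap
            (Option.map_injective (Equiv.swap j ⟨0, by omega⟩).injective))
      · exact fun u v h => rst3_map_adj σ τ h
    · have he : e (some (i, some j)) = some (⟨0, by omega⟩, some ⟨0, by omega⟩) := by
        simp only [e, σ, τ, Option.map_some, Prod.map]
        rw [Equiv.swap_apply_left, Equiv.swap_apply_left]
      show Glab k₁ k₂ (e (some (i, some j))) = 0
      rw [he]
      rfl
end

section
/- A symmetric spider with b legs of length 2 (the rooted symmetric tree with daughter degree sequence (b, 1)) is 0-rotatable. -/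
/-- A symmetric spider with `b` legs of length 2: `none` is the centre,
`some (i, false)` is the middle vertex of the `i`-th leg and `some (i, true)` is its
leaf. -/
def spider2 (b : ℕ) : SimpleGraph (Option (Fin b × Bool)) :=
  SimpleGraph.fromRel (fun u v =>
    (u = none ∧ ∃ i, v = some (i, false)) ∨
    (∃ i, u = some (i, false) ∧ v = some (i, true)))

/-! Permuting the legs is an automorphism, so it suffices to put label 0 on the centre, on the
middle vertex of leg 0 and on the leaf of leg 0. In each of the three labellings below, the edges
at the centre receive even labels and the remaining edges odd labels `|4k + c - 2b|` (`k` the leg,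
`c` odd; for the leaf labelling leg 0 is the exception, with labels `2b - 1` and `2b`). Two of
these odd labels cannot coincide, since `4k + c - 2b = 2b - 4j - c` forces `2(k + j) + c = 2b`. -/

theorem IsGraceful.comp_iso {V W : Type*} [Fintype V] [Fintype W] {G : SimpleGraph V}
    {H : SimpleGraph W} {f : W → ℕ} (hf : IsGraceful H f) (φ : G ≃g H) :
    IsGraceful G (f ∘ φ) := by
  obtain ⟨hinj, hlt, hedge⟩ := hf
  refine ⟨hinj.comp φ.injective, fun v => Fintype.card_congr φ.toEquiv ▸ hlt (φ v), ?_⟩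
  intro u v u' v' huv hu'v' hlabel
  have := hedge _ _ _ _ (φ.map_adj_iff.2 huv) (φ.map_adj_iff.2 hu'v') hlabel
  simpa only [Sym2.eq_iff, φ.injective.eq_iff] using this

namespace Spider2

variable {b : ℕ}

def parent : Fin b × Bool → Option (Fin b × Bool)
  | (_, false) => none
  | (i, true) => some (i, false)

theorem adj_iff {u v : Option (Fin b × Bool)} :
    (spider2 b).Adj u v ↔ ∃ e, s(u, v) = s(parent e, some e) := by
  simp only [spider2, SimpleGraph.fromRel_adj, Sym2.eq_iff]
  constructor
  · rintro ⟨-, h⟩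
    aesop
  · rintro ⟨⟨i, _ | _⟩, h⟩ <;> simp only [parent] at h <;> aesop

theorem isGraceful_of_injective {f : Option (Fin b × Bool) → ℕ} (hf : Function.Injective f)
    (hle : ∀ v, f v ≤ 2 * b)
    (hedge : Function.Injective fun e => ((f (parent e) : ℤ) - f (some e)).natAbs) :
    IsGraceful (spider2 b) f := by
  have hlabel : ∀ {u v e}, s(u, v) = s(parent e, some e) →
      ((f u : ℤ) - f v).natAbs = ((f (parent e) : ℤ) - f (some e)).natAbs := by
    intro u v e h
    rcases Sym2.eq_iff.1 h with ⟨rfl, rfl⟩ | ⟨rfl, rfl⟩ <;> omega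
  refine ⟨hf, fun v => ?_, fun u v u' v' huv hu'v' h => ?_⟩
  · simpa [Nat.lt_succ_iff, mul_comm] using hle v
  obtain ⟨e, he⟩ := adj_iff.1 huv
  obtain ⟨e', he'⟩ := adj_iff.1 hu'v'
  rw [he, he', hedge ((hlabel he).symm.trans (h.trans (hlabel he')))]

def legPerm (σ : Equiv.Perm (Fin b)) : spider2 b ≃g spider2 b where
  toEquiv := (σ.prodCongr (Equiv.refl Bool)).optionCongr
  map_rel_iff' := by
    rintro (_ | ⟨i, _ | _⟩) (_ | ⟨j, _ | _⟩) <;> simp [spider2]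

theorem exists_isGraceful_leg_of_exists {j : Fin b} {t : Bool}
    (h : ∃ f, IsGraceful (spider2 b) f ∧ f (some (j, t)) = 0) (i : Fin b) :
    ∃ f, IsGraceful (spider2 b) f ∧ f (some (i, t)) = 0 := by
  obtain ⟨f, hf, hf0⟩ := h
  exact ⟨f ∘ legPerm (Equiv.swap i j), hf.comp_iso _, by simpa [legPerm] using hf0⟩

variable (b)

def centreLabelling : Option (Fin b × Bool) → ℕ
  | none => 0
  | some (k, false) => 2 * k + 2
  | some (k, true) => 2 * b - 1 - 2 * k

def middleLabelling : Option (Fin b × Bool) → ℕ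
  | none => 2 * b
  | some (k, false) => 2 * k
  | some (k, true) => 2 * b - 1 - 2 * k

def leafLabelling : Option (Fin b × Bool) → ℕ
  | none => 1
  | some (⟨0, _⟩, false) => 2 * b
  | some (⟨0, _⟩, true) => 0
  | some (⟨k + 1, _⟩, false) => 2 * k + 3
  | some (⟨k + 1, _⟩, true) => 2 * b - 2 - 2 * k

theorem isGraceful_centreLabelling : IsGraceful (spider2 b) (centreLabelling b) := by
  apply isGraceful_of_injective
  · rintro (_ | ⟨⟨i, hi⟩, _ | _⟩) (_ | ⟨⟨j, hj⟩, _ | _⟩) h <;>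
      simp only [centreLabelling, Option.some.injEq, Prod.mk.injEq, Fin.mk.injEq, reduceCtorEq,
        and_true, and_false, Bool.false_eq_true, Bool.true_eq_false] at h ⊢ <;> omega
  · rintro (_ | ⟨⟨i, hi⟩, _ | _⟩) <;> simp only [centreLabelling] <;> omega
  · rintro ⟨⟨i, hi⟩, _ | _⟩ ⟨⟨j, hj⟩, _ | _⟩ h <;>
      simp only [centreLabelling, parent, Prod.mk.injEq, Fin.mk.injEq, and_true, and_false,
        Bool.false_eq_true, Bool.true_eq_false] at h ⊢ <;> omega

theorem isGraceful_middleLabelling : IsGraceful (spider2 b) (middleLabelling b) := by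
  apply isGraceful_of_injective
  · rintro (_ | ⟨⟨i, hi⟩, _ | _⟩) (_ | ⟨⟨j, hj⟩, _ | _⟩) h <;>
      simp only [middleLabelling, Option.some.injEq, Prod.mk.injEq, Fin.mk.injEq, reduceCtorEq,
        and_true, and_false, Bool.false_eq_true, Bool.true_eq_false] at h ⊢ <;> omega
  · rintro (_ | ⟨⟨i, hi⟩, _ | _⟩) <;> simp only [middleLabelling] <;> omega
  · rintro ⟨⟨i, hi⟩, _ | _⟩ ⟨⟨j, hj⟩, _ | _⟩ h <;>
      simp only [middleLabelling, parent, Prod.mk.injEq, Fin.mk.injEq, and_true, and_false,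
        Bool.false_eq_true, Bool.true_eq_false] at h ⊢ <;> omega

theorem isGraceful_leafLabelling (hb : 0 < b) : IsGraceful (spider2 b) (leafLabelling b) := by
  apply isGraceful_of_injective
  · rintro (_ | ⟨⟨_ | i, hi⟩, _ | _⟩) (_ | ⟨⟨_ | j, hj⟩, _ | _⟩) h <;>
      simp only [leafLabelling, Option.some.injEq, Prod.mk.injEq, Fin.mk.injEq, reduceCtorEq,
        and_true, and_false, Bool.false_eq_true, Bool.true_eq_false] at h ⊢ <;> omega
  · rintro (_ | ⟨⟨_ | i, hi⟩, _ | _⟩) <;> simp only [leafLabelling] <;> omega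
  · rintro ⟨⟨_ | i, hi⟩, _ | _⟩ ⟨⟨_ | j, hj⟩, _ | _⟩ h <;>
      simp only [leafLabelling, parent, Prod.mk.injEq, Fin.mk.injEq, and_true, and_false,
        Bool.false_eq_true, Bool.true_eq_false] at h ⊢ <;> omega

end Spider2

theorem spider2_zeroRotatable_general (b : ℕ) :
    ∀ v : Option (Fin b × Bool),
      ∃ f : Option (Fin b × Bool) → ℕ, IsGraceful (spider2 b) f ∧ f v = 0 := by
  rintro (_ | ⟨i, _ | _⟩)
  · exact ⟨Spider2.centreLabelling b, Spider2.isGraceful_centreLabelling b, rfl⟩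
  · exact Spider2.exists_isGraceful_leg_of_exists
      (j := ⟨0, i.pos⟩) ⟨_, Spider2.isGraceful_middleLabelling b, rfl⟩ i
  · exact Spider2.exists_isGraceful_leg_of_exists
      (j := ⟨0, i.pos⟩) ⟨_, Spider2.isGraceful_leafLabelling b i.pos, rfl⟩ i

/-- A symmetric spider with `b` legs of length 2 (the rooted symmetric tree with
daughter degree sequence `(b, 1)`) is 0-rotatable. -/
theorem spider2_zeroRotatable (b : ℕ) (hb : 1 ≤ b) :
    ∀ v : Option (Fin b × Bool),
      ∃ f : Option (Fin b × Bool) → ℕ, IsGraceful (spider2 b) f ∧ f v = 0 :=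
  spider2_zeroRotatable_general b
end
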